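/- arXiv:1911.07465 — 3 statements merged into one kernel-verified Lean document; each statement's English description precedes it below -/
import Mathlib

section
/- Let H be a finite simple graph and let a c-edge-coloring H^c of H be given such that for every i in [c] the color-i subgraph of H^c is isomorphic to a star. Then a finite simple graph F is isomorphic to H if and only if F admits a c-edge-coloring F^c whose colored degree multiset equals the colored degree multiset of H^c. -/
open SimpleGraph

namespace TMEnum

/-- A `c`-edge-coloring of `F`: a partition of the edge set of `F` into `c` pairwise
disjoint classes `D 0, …, D (c-1)`. -/
structure EdgeColoring {V : Type} (F : SimpleGraph V) (c : ℕ) where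
  D : Fin c → Set (Sym2 V)
  subset_edgeSet : ∀ i, D i ⊆ F.edgeSet
  pairwise_disjoint : ∀ i j, i ≠ j → Disjoint (D i) (D j)
  iUnion_eq : (⋃ i, D i) = F.edgeSet

/-- The colored degree of a vertex `v`: its `i`-th entry is the number of edges of
color `i` incident to `v`. -/
noncomputable def coloredDeg {V : Type} {F : SimpleGraph V} {c : ℕ}
    (col : EdgeColoring F c) (v : V) : Fin c → ℕ :=
  fun i => {e ∈ col.D i | v ∈ e}.ncard

/-- The colored degree multiset: the multiset of colored degrees of all vertices. -/
noncomputable def coloredDegMultiset {V : Type} [Fintype V] {F : SimpleGraph V} {c : ℕ}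
    (col : EdgeColoring F c) : Multiset (Fin c → ℕ) :=
  (Finset.univ : Finset V).val.map (coloredDeg col)

/-- The color-`i` subgraph: the subgraph of `F` consisting of the edges of color `i`
together with their endpoints. -/
def colorSubgraph {V : Type} {F : SimpleGraph V} {c : ℕ}
    (col : EdgeColoring F c) (i : Fin c) : F.Subgraph where
  verts := {v | ∃ e ∈ col.D i, v ∈ e}
  Adj a b := s(a, b) ∈ col.D i
  adj_sub := fun {a b} h => (F.mem_edgeSet).mp (col.subset_edgeSet _ h)
  edge_vert := fun {a b} h => ⟨s(a, b), h, Sym2.mem_mk_left a b⟩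
  symm := ⟨fun a b h => by show s(b, a) ∈ col.D i; rw [Sym2.eq_swap]; exact h⟩

/-- `Delta c`: the set of `c`-tuples of naturals with value `2` in exactly one
coordinate and `0` in all others. -/
def Delta (c : ℕ) : Set (Fin c → ℕ) :=
  {δ | ∃ i : Fin c, δ = fun j => if j = i then 2 else 0}

/-- A coloring satisfies the constraint `C*_M` if (a) its colored degree multiset is `M`
plus finitely many elements of `Delta c`, and (b) every color subgraph is connected. -/
def SatisfiesCStar {V : Type} [Fintype V] {F : SimpleGraph V} {c : ℕ}
    (col : EdgeColoring F c) (M : Multiset (Fin c → ℕ)) : Prop :=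
  (∃ ext : Multiset (Fin c → ℕ), (∀ δ ∈ ext, δ ∈ Delta c) ∧
      coloredDegMultiset col = M + ext) ∧
  ∀ i : Fin c, (colorSubgraph col i).Connected

/-- Subdividing the edge `uv` of `G`: remove the edge `uv`, add a new vertex `w`, and
add the edges `uw` and `vw`. -/
def subdivideEdge {V : Type} (G : SimpleGraph V) (u v : V) : SimpleGraph (V ⊕ Unit) :=
  SimpleGraph.fromRel (fun a b =>
    match a, b with
    | Sum.inl a, Sum.inl b => G.Adj a b ∧ s(a, b) ≠ s(u, v)
    | Sum.inl a, Sum.inr _ => a = u ∨ a = v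
    | _, _ => False)

/-- `IsSubdivisionOf F H` : `F` is isomorphic to a subdivision of `H`, i.e. to a graph
obtained from `H` by a finite sequence of single-edge subdivisions. -/
inductive IsSubdivisionOf : {V W : Type} → SimpleGraph V → SimpleGraph W → Prop
  | of_iso {V W : Type} {F : SimpleGraph V} {H : SimpleGraph W} :
      Nonempty (F ≃g H) → IsSubdivisionOf F H
  | step {V W : Type} {F : SimpleGraph V} {H : SimpleGraph W} {u v : W} :
      H.Adj u v → IsSubdivisionOf F (subdivideEdge H u v) → IsSubdivisionOf F H

/-- A subgraph is (isomorphic to) a star `K_{1,x}`: its coercion to a simple graph is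
isomorphic to the complete bipartite graph with parts of sizes `1` and `x`. -/
def IsStarSubgraph {V : Type} {F : SimpleGraph V} (s : F.Subgraph) : Prop :=
  ∃ x : ℕ, 1 ≤ x ∧ Nonempty (s.coe ≃g completeBipartiteGraph Unit (Fin x))

section Aux
variable {U : Type} {G : SimpleGraph U} {c : ℕ}

def nbrs (col : EdgeColoring G c) (i : Fin c) (v : U) : Set U := {u | s(v, u) ∈ col.D i}

lemma mem_nbrs {col : EdgeColoring G c} {i : Fin c} {u v : U} :
    u ∈ nbrs col i v ↔ s(v, u) ∈ col.D i := Iff.rfl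

lemma nbrs_comm {col : EdgeColoring G c} {i : Fin c} {u v : U} :
    u ∈ nbrs col i v ↔ v ∈ nbrs col i u := by
  rw [mem_nbrs, mem_nbrs, Sym2.eq_swap]

lemma ne_of_mem_nbrs {col : EdgeColoring G c} {i : Fin c} {u v : U}
    (h : u ∈ nbrs col i v) : u ≠ v :=
  (G.ne_of_adj (G.mem_edgeSet.mp (col.subset_edgeSet i h))).symm

lemma coloredDeg_eq_ncard_nbrs (col : EdgeColoring G c) (i : Fin c) (v : U) :
    coloredDeg col v i = (nbrs col i v).ncard := by
  have himg : (fun u => s(v, u)) '' nbrs col i v = {e ∈ col.D i | v ∈ e} := by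
    ext e
    constructor
    · rintro ⟨u, hu, rfl⟩
      exact ⟨hu, Sym2.mem_mk_left v u⟩
    · rintro ⟨he, hv⟩
      obtain ⟨u, rfl⟩ := Sym2.mem_iff_exists.mp hv
      exact ⟨u, he, rfl⟩
  have hinj : Function.Injective (fun u => s(v, u)) := fun a b h =>
    Sym2.congr_right.mp h
  show {e ∈ col.D i | v ∈ e}.ncard = _
  rw [← himg, Set.ncard_image_of_injective _ hinj]

lemma mem_verts_of_coloredDeg_ne_zero [Fintype U] {col : EdgeColoring G c} {i : Fin c} {v : U}
    (h : coloredDeg col v i ≠ 0) : v ∈ (colorSubgraph col i).verts := by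
  rw [coloredDeg_eq_ncard_nbrs] at h
  obtain ⟨u, hu⟩ := Set.nonempty_of_ncard_ne_zero h
  show v ∈ {v | ∃ e ∈ col.D i, v ∈ e}
  exact ⟨s(v, u), hu, Sym2.mem_mk_left v u⟩

end Aux

section Star

noncomputable def Kdeg (x : ℕ) (z : Unit ⊕ Fin x) : ℕ :=
  Nat.card ((completeBipartiteGraph Unit (Fin x)).neighborSet z)

lemma Kdeg_inl (x : ℕ) (u : Unit) : Kdeg x (Sum.inl u) = x := by
  have h : (completeBipartiteGraph Unit (Fin x)).neighborSet (Sum.inl u) = Set.range Sum.inr := by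
    ext z
    cases z <;> simp [completeBipartiteGraph, SimpleGraph.neighborSet]
  rw [Kdeg, h, Nat.card_range_of_injective Sum.inr_injective, Nat.card_eq_fintype_card,
    Fintype.card_fin]

lemma Kdeg_inr (x : ℕ) (j : Fin x) : Kdeg x (Sum.inr j) = 1 := by
  have h : (completeBipartiteGraph Unit (Fin x)).neighborSet (Sum.inr j) = Set.range Sum.inl := by
    ext z
    cases z <;> simp [completeBipartiteGraph, SimpleGraph.neighborSet]
  rw [Kdeg, h, Nat.card_range_of_injective Sum.inl_injective, Nat.card_unique]

variable {U : Type} {G : SimpleGraph U} {c : ℕ}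

lemma coloredDeg_eq_Kdeg [Fintype U] (col : EdgeColoring G c) (i : Fin c) {x : ℕ}
    (ψ : (colorSubgraph col i).coe ≃g completeBipartiteGraph Unit (Fin x))
    (v : U) (hv : v ∈ (colorSubgraph col i).verts) :
    coloredDeg col v i = Kdeg x (ψ ⟨v, hv⟩) := by
  rw [coloredDeg_eq_ncard_nbrs, ← Nat.card_coe_set_eq, Kdeg]
  exact Nat.card_congr
    ((SimpleGraph.Subgraph.coeNeighborSetEquiv ⟨v, hv⟩).symm.trans (ψ.mapNeighborSet ⟨v, hv⟩))

lemma fiber_ncard_K [Fintype U] (col : EdgeColoring G c) (i : Fin c) {x : ℕ}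
    (ψ : (colorSubgraph col i).coe ≃g completeBipartiteGraph Unit (Fin x))
    (k : ℕ) (hk : k ≠ 0) :
    {v : U | coloredDeg col v i = k}.ncard = {z : Unit ⊕ Fin x | Kdeg x z = k}.ncard := by
  rw [← Nat.card_coe_set_eq, ← Nat.card_coe_set_eq]
  refine Nat.card_congr ?_
  refine
    { toFun := fun v => ⟨ψ ⟨v.1, mem_verts_of_coloredDeg_ne_zero (by rw [v.2]; exact hk)⟩, ?_⟩
      invFun := fun z => ⟨(ψ.symm z.1).1, ?_⟩
      left_inv := ?_
      right_inv := ?_ }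
  · exact ((coloredDeg_eq_Kdeg col i ψ v.1
      (mem_verts_of_coloredDeg_ne_zero (by rw [v.2]; exact hk))).symm.trans v.2)
  · have h1 := coloredDeg_eq_Kdeg col i ψ (ψ.symm z.1).1 (ψ.symm z.1).2
    exact h1.trans ((congrArg (Kdeg x) (ψ.apply_symm_apply z.1)).trans z.2)
  · intro v
    apply Subtype.ext
    exact congrArg (fun (w : ↥(colorSubgraph col i).verts) => w.val) (ψ.symm_apply_apply
      ⟨v.1, mem_verts_of_coloredDeg_ne_zero (by rw [v.2]; exact hk)⟩)
  · intro z
    apply Subtype.ext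
    exact congrArg (fun (w : {z : Unit ⊕ Fin x // Kdeg x z = k}) => w.val)
      (Subtype.ext (ψ.apply_symm_apply z.1) :
      (⟨ψ ⟨(ψ.symm z.1).1, (ψ.symm z.1).2⟩, (coloredDeg_eq_Kdeg col i ψ (ψ.symm z.1).1
        (ψ.symm z.1).2).symm.trans ((coloredDeg_eq_Kdeg col i ψ (ψ.symm z.1).1
        (ψ.symm z.1).2).trans ((congrArg (Kdeg x) (ψ.apply_symm_apply z.1)).trans z.2))⟩ :
        {z : Unit ⊕ Fin x // Kdeg x z = k}) = z)

lemma star_counts [Fintype U] (col : EdgeColoring G c) (i : Fin c) {x : ℕ} (hx : 1 ≤ x)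
    (ψ : (colorSubgraph col i).coe ≃g completeBipartiteGraph Unit (Fin x)) :
    ({v : U | coloredDeg col v i = 1}.ncard = if x = 1 then 2 else x) ∧
    (x = 1 ∨ {v : U | coloredDeg col v i = x}.ncard = 1) ∧
    (∀ v, coloredDeg col v i = 0 ∨ coloredDeg col v i = 1 ∨ coloredDeg col v i = x) := by
  have hall : ∀ v, coloredDeg col v i = 0 ∨ coloredDeg col v i = 1 ∨ coloredDeg col v i = x := by
    intro v
    by_cases h0 : coloredDeg col v i = 0
    · exact Or.inl h0
    · have hv := mem_verts_of_coloredDeg_ne_zero h0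
      have hd := coloredDeg_eq_Kdeg col i ψ v hv
      rcases hz : ψ ⟨v, hv⟩ with u | j
      · right; right; rw [hd, hz, Kdeg_inl]
      · right; left; rw [hd, hz, Kdeg_inr]
  refine ⟨?_, ?_, hall⟩
  · by_cases hx1 : x = 1
    · subst hx1
      rw [if_pos rfl, fiber_ncard_K col i ψ 1 one_ne_zero]
      have hset : {z : Unit ⊕ Fin 1 | Kdeg 1 z = 1} = Set.univ := by
        ext z; rcases z with u | j <;> simp [Kdeg_inl, Kdeg_inr]
      rw [hset, Set.ncard_univ, Nat.card_sum, Nat.card_unique, Nat.card_eq_fintype_card,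
        Fintype.card_fin]
    · rw [if_neg hx1, fiber_ncard_K col i ψ 1 one_ne_zero]
      have hset : {z : Unit ⊕ Fin x | Kdeg x z = 1} = Set.range Sum.inr := by
        ext z; rcases z with u | j <;> simp [Kdeg_inl, Kdeg_inr, hx1]
      rw [hset, ← Nat.card_coe_set_eq, Nat.card_range_of_injective Sum.inr_injective,
        Nat.card_eq_fintype_card, Fintype.card_fin]
  · by_cases hx1 : x = 1
    · exact Or.inl hx1
    · right
      have hx0 : x ≠ 0 := by omega
      rw [fiber_ncard_K col i ψ x hx0]
      have hset : {z : Unit ⊕ Fin x | Kdeg x z = x} = Set.range Sum.inl := by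
        ext z; rcases z with u | j <;> simp [Kdeg_inl, Kdeg_inr]
        exact fun h => hx1 h.symm
      rw [hset, ← Nat.card_coe_set_eq, Nat.card_range_of_injective Sum.inl_injective,
        Nat.card_unique]

lemma fiber_ncard_eq_count {α β : Type} [Fintype α] [DecidableEq β] (f : α → β) (b : β) :
    {a | f a = b}.ncard = Multiset.count b (Finset.univ.val.map f) := by
  classical
  rw [Multiset.count_map]
  have h2 : Multiset.filter (fun a => b = f a) Finset.univ.val
      = Multiset.filter (fun a => f a = b) Finset.univ.val :=
    Multiset.filter_congr (fun a _ => eq_comm)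
  rw [h2]
  have h3 : {a | f a = b} = ↑(Finset.univ.filter (fun a => f a = b)) := by ext a; simp
  rw [h3, Set.ncard_coe_finset, Finset.card_def, Finset.filter_val]

lemma exists_equiv_of_multiset_eq {α β γ : Type} [Fintype α] [Fintype β] [DecidableEq γ] (f : α → γ) (g : β → γ)
    (h : Finset.univ.val.map f = Finset.univ.val.map g) :
    ∃ e : α ≃ β, ∀ a, g (e a) = f a := by
  classical
  have hfe : ∀ d : γ, Nonempty ({a // f a = d} ≃ {b // g b = d}) := by
    intro d
    refine Finite.card_eq.mp ?_
    have h1 : {a | f a = d}.ncard = {b | g b = d}.ncard := by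
      rw [fiber_ncard_eq_count f d, fiber_ncard_eq_count g d, h]
    rw [← Nat.card_coe_set_eq, ← Nat.card_coe_set_eq] at h1
    exact h1
  let fe : ∀ d : γ, {a // f a = d} ≃ {b // g b = d} := fun d => (hfe d).some
  refine ⟨(Equiv.sigmaFiberEquiv f).symm.trans
    ((Equiv.sigmaCongrRight fe).trans (Equiv.sigmaFiberEquiv g)), ?_⟩
  intro a
  exact (fe (f a) ⟨a, rfl⟩).2

end Star

section AdjChar
variable {U : Type} {G : SimpleGraph U} {c : ℕ}

lemma adj_char [Fintype U] (col : EdgeColoring G c) (i : Fin c) (x : ℕ)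
    (h1 : {v : U | coloredDeg col v i = 1}.ncard = if x = 1 then 2 else x)
    (hxx : x = 1 ∨ {v : U | coloredDeg col v i = x}.ncard = 1)
    (hall : ∀ v, coloredDeg col v i = 0 ∨ coloredDeg col v i = 1 ∨ coloredDeg col v i = x)
    {a b : U} (hab : a ≠ b) :
    s(a, b) ∈ col.D i ↔
      ((coloredDeg col a i = x ∧ coloredDeg col b i = 1) ∨
       (coloredDeg col a i = 1 ∧ coloredDeg col b i = x)) := by
  have hdN : ∀ v, coloredDeg col v i = (nbrs col i v).ncard := coloredDeg_eq_ncard_nbrs col i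
  have hpos : ∀ u v : U, v ∈ nbrs col i u → coloredDeg col u i ≠ 0 := by
    intro u v hv h0
    rw [hdN u, Set.ncard_eq_zero (Set.toFinite _)] at h0
    rw [h0] at hv
    exact hv
  rcases eq_or_ne x 1 with hx1 | hx1
  · subst hx1
    rw [if_pos rfl] at h1
    obtain ⟨p, q, hpq, hL⟩ := Set.ncard_eq_two.mp h1
    have hdp : coloredDeg col p i = 1 := by
      have hp : p ∈ {v : U | coloredDeg col v i = 1} := by rw [hL]; exact Set.mem_insert _ _
      exact hp
    obtain ⟨u0, hu0⟩ := Set.ncard_eq_one.mp ((hdN p) ▸ hdp)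
    have hu0m : u0 ∈ nbrs col i p := by rw [hu0]; rfl
    have hu0p : u0 ≠ p := ne_of_mem_nbrs hu0m
    have hd_u0 : coloredDeg col u0 i = 1 := by
      rcases hall u0 with h | h | h
      · exact absurd h (hpos u0 p (nbrs_comm.mp hu0m))
      · exact h
      · exact h
    have hu0q : u0 = q := by
      have hu0L : u0 ∈ {v : U | coloredDeg col v i = 1} := hd_u0
      rw [hL] at hu0L
      simp only [Set.mem_insert_iff, Set.mem_singleton_iff] at hu0L
      rcases hu0L with h | h
      · exact absurd h hu0p
      · exact h
    have hedge : s(p, q) ∈ col.D i := by rw [← hu0q]; exact hu0m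
    constructor
    · intro h
      have hda : coloredDeg col a i = 1 := by
        rcases hall a with h' | h' | h'
        · exact absurd h' (hpos a b h)
        · exact h'
        · exact h'
      have hdb : coloredDeg col b i = 1 := by
        rcases hall b with h' | h' | h'
        · exact absurd h' (hpos b a (nbrs_comm.mp (show b ∈ nbrs col i a from h)))
        · exact h'
        · exact h'
      exact Or.inl ⟨hda, hdb⟩
    · rintro (⟨ha', hb'⟩ | ⟨ha', hb'⟩) <;>
      · have haL : a ∈ ({p, q} : Set U) := by rw [← hL]; exact ha'
        have hbL : b ∈ ({p, q} : Set U) := by rw [← hL]; exact hb'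
        simp only [Set.mem_insert_iff, Set.mem_singleton_iff] at haL hbL
        rcases haL with rfl | rfl <;> rcases hbL with rfl | rfl
        · exact absurd rfl hab
        · exact hedge
        · rw [Sym2.eq_swap]; exact hedge
        · exact absurd rfl hab
  · rw [if_neg hx1] at h1
    obtain ⟨w0, hw0⟩ := Set.ncard_eq_one.mp (hxx.resolve_left hx1)
    have hdw0 : coloredDeg col w0 i = x := by
      have h' : w0 ∈ {v : U | coloredDeg col v i = x} := by rw [hw0]; rfl
      exact h'
    have hmemx : ∀ v, coloredDeg col v i = x → v = w0 := by
      intro v hv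
      have h' : v ∈ {v : U | coloredDeg col v i = x} := hv
      rw [hw0] at h'
      exact h'
    have hsub : nbrs col i w0 ⊆ {v : U | coloredDeg col v i = 1} := by
      intro u hu
      have hne := ne_of_mem_nbrs hu
      rcases hall u with h | h | h
      · exact absurd h (hpos u w0 (nbrs_comm.mp hu))
      · exact h
      · exact absurd (hmemx u h) hne
    have hNw0 : nbrs col i w0 = {v : U | coloredDeg col v i = 1} := by
      apply Set.eq_of_subset_of_ncard_le hsub
      rw [h1, ← hdN w0, hdw0]
    constructor
    · intro h
      have hbNa : b ∈ nbrs col i a := h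
      have haNb : a ∈ nbrs col i b := nbrs_comm.mp hbNa
      rcases hall a with h0 | h1a | hxa
      · exact absurd h0 (hpos a b hbNa)
      · right
        refine ⟨h1a, ?_⟩
        rcases hall b with h0' | h1b | hxb
        · exact absurd h0' (hpos b a haNb)
        · exfalso
          have hbw0 : b ∈ nbrs col i w0 := by rw [hNw0]; exact h1b
          have hw0Nb : w0 ∈ nbrs col i b := nbrs_comm.mp hbw0
          have haw0 : a ≠ w0 := by
            intro h'
            rw [h', hdw0] at h1a
            exact hx1 h1a
          have hlt : 1 < (nbrs col i b).ncard := by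
            rw [Set.one_lt_ncard (Set.toFinite _)]
            exact ⟨a, haNb, w0, hw0Nb, haw0⟩
          rw [← hdN b, h1b] at hlt
          omega
        · exact hxb
      · left
        refine ⟨hxa, ?_⟩
        have hw := hmemx a hxa
        subst hw
        have hb' : b ∈ {v : U | coloredDeg col v i = 1} := by rw [← hNw0]; exact hbNa
        exact hb'
    · rintro (⟨hax, hb1⟩ | ⟨ha1, hbx⟩)
      · have hw := hmemx a hax
        subst hw
        have hb' : b ∈ nbrs col i a := by rw [hNw0]; exact hb1
        exact hb'
      · have hw := hmemx b hbx
        subst hw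
        have ha' : a ∈ nbrs col i b := by rw [hNw0]; exact ha1
        rw [Sym2.eq_swap]
        exact ha'

end AdjChar

lemma iso_pullback {V W : Type} [Fintype V] [Fintype W] {H : SimpleGraph V} {F : SimpleGraph W}
    {c : ℕ} (colH : EdgeColoring H c) (φ : F ≃g H) :
    ∃ colF : EdgeColoring F c, coloredDegMultiset colF = coloredDegMultiset colH := by
  classical
  let colF : EdgeColoring F c :=
    { D := fun i => Sym2.map ⇑φ ⁻¹' colH.D i
      subset_edgeSet := by
        intro i e
        induction e using Sym2.ind with
        | _ a b =>
          intro he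
          have h2 := colH.subset_edgeSet i he
          rw [Sym2.map_pair_eq, SimpleGraph.mem_edgeSet] at h2
          exact F.mem_edgeSet.mpr (φ.map_adj_iff.mp h2)
      pairwise_disjoint := fun i j hij => Disjoint.preimage _ (colH.pairwise_disjoint i j hij)
      iUnion_eq := by
        rw [← Set.preimage_iUnion, colH.iUnion_eq]
        ext e
        induction e using Sym2.ind with
        | _ a b =>
          simp only [Set.mem_preimage, Sym2.map_pair_eq, SimpleGraph.mem_edgeSet]
          exact φ.map_adj_iff }
  refine ⟨colF, ?_⟩
  have hdeg : ∀ w : W, coloredDeg colF w = coloredDeg colH (φ w) := by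
    intro w
    funext i
    show {e ∈ colF.D i | w ∈ e}.ncard = {e ∈ colH.D i | φ w ∈ e}.ncard
    have himg : Sym2.map ⇑φ '' {e ∈ colF.D i | w ∈ e} = {e ∈ colH.D i | φ w ∈ e} := by
      ext e'
      constructor
      · rintro ⟨e, ⟨he, hw⟩, rfl⟩
        refine ⟨he, ?_⟩
        rw [Sym2.mem_map]
        exact ⟨w, hw, rfl⟩
      · rintro ⟨he', hw'⟩
        have hmap : Sym2.map (⇑φ) (Sym2.map (⇑φ.symm) e') = e' := by
          rw [Sym2.map_map]
          have hcomp : (⇑φ) ∘ (⇑φ.symm) = id := funext fun z => φ.apply_symm_apply z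
          rw [hcomp, Sym2.map_id]
          rfl
        refine ⟨Sym2.map (⇑φ.symm) e', ⟨?_, ?_⟩, hmap⟩
        · show Sym2.map ⇑φ (Sym2.map (⇑φ.symm) e') ∈ colH.D i
          rw [hmap]
          exact he'
        · rw [Sym2.mem_map]
          exact ⟨φ w, hw', φ.symm_apply_apply w⟩
    rw [← himg, Set.ncard_image_of_injective _ (Sym2.map.injective (RelIso.injective φ))]
  show Finset.univ.val.map (coloredDeg colF) = Finset.univ.val.map (coloredDeg colH)
  have huniv : (Finset.univ.val : Multiset W).map ⇑φ.toEquiv = (Finset.univ.val : Multiset V) := by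
    have h3 : (Finset.map φ.toEquiv.toEmbedding Finset.univ).val = (Finset.univ.val : Multiset V) :=
      congrArg Finset.val (Finset.map_univ_equiv φ.toEquiv)
    rw [Finset.map_val] at h3
    exact h3
  calc Finset.univ.val.map (coloredDeg colF)
      = Finset.univ.val.map ((coloredDeg colH) ∘ ⇑φ.toEquiv) :=
        Multiset.map_congr rfl (fun w _ => hdeg w)
    _ = ((Finset.univ.val : Multiset W).map ⇑φ.toEquiv).map (coloredDeg colH) :=
        (Multiset.map_map _ _ _).symm
    _ = Finset.univ.val.map (coloredDeg colH) := by rw [huniv]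


/-- If `H` carries a `c`-edge-coloring all of whose color subgraphs are
isomorphic to stars, then a graph `F` is isomorphic to `H` iff `F` admits a
`c`-edge-coloring with the same colored degree multiset as that of `H`. -/
theorem star_coloring_profile {V W : Type} [Fintype V] [Fintype W]
    (H : SimpleGraph V) (F : SimpleGraph W) {c : ℕ}
    (colH : EdgeColoring H c)
    (hstar : ∀ i : Fin c, IsStarSubgraph (colorSubgraph colH i)) :
    Nonempty (F ≃g H) ↔
      ∃ colF : EdgeColoring F c, coloredDegMultiset colF = coloredDegMultiset colH := by
  classical
  constructor
  · rintro ⟨φ⟩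
    exact iso_pullback colH φ
  · rintro ⟨colF, hM⟩
    choose x hx1 hψn using hstar
    have hψ : ∀ i, (colorSubgraph colH i).coe ≃g completeBipartiteGraph Unit (Fin (x i)) :=
      fun i => (hψn i).some
    have hcnt := fun i => star_counts colH i (hx1 i) (hψ i)
    have hmapi : ∀ i : Fin c, Finset.univ.val.map (fun w => coloredDeg colF w i)
        = Finset.univ.val.map (fun v => coloredDeg colH v i) := by
      intro i
      have h2 := congrArg (Multiset.map (fun d : Fin c → ℕ => d i)) hM
      simpa [coloredDegMultiset, Multiset.map_map, Function.comp] using h2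
    have hfib : ∀ (i : Fin c) (k : ℕ), {w : W | coloredDeg colF w i = k}.ncard
        = {v : V | coloredDeg colH v i = k}.ncard := by
      intro i k
      rw [fiber_ncard_eq_count _ k, fiber_ncard_eq_count _ k, hmapi i]
    have hallF : ∀ (i : Fin c) (w : W),
        coloredDeg colF w i = 0 ∨ coloredDeg colF w i = 1 ∨ coloredDeg colF w i = x i := by
      intro i w
      by_contra hcon
      push_neg at hcon
      obtain ⟨h0, h1, hx'⟩ := hcon
      have hne : {v : V | coloredDeg colH v i = coloredDeg colF w i}.ncard = 0 := by
        have hempty : {v : V | coloredDeg colH v i = coloredDeg colF w i} = ∅ := by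
          ext v
          simp only [Set.mem_setOf_eq, Set.mem_empty_iff_false, iff_false]
          intro hv
          rcases (hcnt i).2.2 v with h | h | h
          · exact h0 (hv.symm.trans h)
          · exact h1 (hv.symm.trans h)
          · exact hx' (hv.symm.trans h)
        rw [hempty, Set.ncard_empty]
      have hpos : {w' : W | coloredDeg colF w' i = coloredDeg colF w i}.ncard ≠ 0 := by
        intro h0'
        rw [Set.ncard_eq_zero (Set.toFinite _)] at h0'
        have hw : w ∈ {w' : W | coloredDeg colF w' i = coloredDeg colF w i} := rfl
        rw [h0'] at hw
        exact hw
      exact hpos ((hfib i _).trans hne)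
    have hM' : Finset.univ.val.map (coloredDeg colF) = Finset.univ.val.map (coloredDeg colH) := hM
    obtain ⟨e, he⟩ := exists_equiv_of_multiset_eq (coloredDeg colF) (coloredDeg colH) hM'
    have h1F : ∀ i : Fin c,
        {w : W | coloredDeg colF w i = 1}.ncard = if x i = 1 then 2 else x i :=
      fun i => (hfib i 1).trans (hcnt i).1
    have hxF : ∀ i : Fin c, x i = 1 ∨ {w : W | coloredDeg colF w i = x i}.ncard = 1 := by
      intro i
      rcases (hcnt i).2.1 with h | h
      · exact Or.inl h
      · exact Or.inr ((hfib i (x i)).trans h)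
    have hkey : ∀ a b : W, a ≠ b → (F.Adj a b ↔ H.Adj (e a) (e b)) := by
      intro a b hab
      have heab : e a ≠ e b := fun h' => hab (e.injective h')
      rw [← SimpleGraph.mem_edgeSet, ← SimpleGraph.mem_edgeSet, ← colF.iUnion_eq,
        ← colH.iUnion_eq, Set.mem_iUnion, Set.mem_iUnion]
      constructor
      · rintro ⟨i, hi⟩
        refine ⟨i, ?_⟩
        rw [adj_char colH i (x i) (hcnt i).1 (hcnt i).2.1 (hcnt i).2.2 heab, he a, he b]
        exact (adj_char colF i (x i) (h1F i) (hxF i) (hallF i) hab).mp hi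
      · rintro ⟨i, hi⟩
        refine ⟨i, ?_⟩
        rw [adj_char colF i (x i) (h1F i) (hxF i) (hallF i) hab]
        have h2 := (adj_char colH i (x i) (hcnt i).1 (hcnt i).2.1 (hcnt i).2.2 heab).mp hi
        rw [he a, he b] at h2
        exact h2
    refine ⟨⟨e, ?_⟩⟩
    intro a b
    by_cases hab : a = b
    · subst hab
      constructor <;> (intro h; exact absurd rfl h.ne)
    · exact (hkey a b hab).symm


end TMEnum
end

section
/- Let a >= 3 be an integer, and let S be the set of (a-2)-tuples of nonnegative integers consisting of the tuple (2, 1, 1, ..., 1) (first coordinate 2, all remaining a-3 coordinates 1), the tuples which, for some i with 2 <= i <= a-2, have coordinates 1 through i-1 equal to 0, coordinate i equal to i+1, and coordinates i+1 through a-2 equal to 1, and the elements of Delta^{a-2}. Then the down-closure of S has exactly 3*2^{a-2} - a elements. -/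
/-!
Write `peak k` for the tuple that is `0` before `k`, `k + 2` at `k` and `1` after `k`. The
tuple `(2, 1, …, 1)` is `peak 0`, the other listed tuples are `peak 1, …, peak (n - 1)`, and the
element of `Delta` with its `2` at `k` lies below `peak k`, so the down-closure is the lower
closure of the peaks. A tuple below some peak either has all coordinates `≤ 1`, or has exactly
one coordinate `k` with value `≥ 2` and then lies in the box `[2 eₖ, peak k]`. These `n + 1`
boxes are pairwise disjoint, of sizes `2 ^ n` and `(k + 1) 2 ^ (n - 1 - k)`, and the sizes add up
to `3 · 2 ^ n - (n + 2)`.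
-/

namespace TMEnum

/-- The down-closure of a set `M` of `c`-tuples of naturals: all tuples dominated
coordinatewise by some element of `M`. -/
def downClosure {c : ℕ} (M : Set (Fin c → ℕ)) : Set (Fin c → ℕ) :=
  {χ | ∃ δ ∈ M, ∀ i, χ i ≤ δ i}

open Finset

theorem _root_.lowerClosure_union_of_subset {α : Type*} [Preorder α] {s t : Set α}
    (h : t ⊆ lowerClosure s) : lowerClosure (s ∪ t) = lowerClosure s := by
  rw [lowerClosure_union, sup_eq_left, lowerClosure_le]
  exact h

theorem _root_.Pi.single_le_iff {ι α : Type*} [DecidableEq ι] [AddCommMonoid α] [PartialOrder α]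
    [CanonicallyOrderedAdd α] {i : ι} {a : α} {f : ι → α} :
    Pi.single i a ≤ f ↔ a ≤ f i := by
  refine ⟨fun h => by simpa using h i, fun h j => ?_⟩
  rcases eq_or_ne j i with rfl | hj
  · simpa using h
  · simp [hj]

theorem sum_range_succ_mul_two_pow_add (n : ℕ) :
    ∑ k ∈ range n, (k + 1) * 2 ^ (n - 1 - k) + (n + 2) = 2 ^ (n + 1) := by
  induction n with
  | zero => simp
  | succ n ih =>
    have hdouble : ∑ k ∈ range n, (k + 1) * 2 ^ (n - k) =
        2 * ∑ k ∈ range n, (k + 1) * 2 ^ (n - 1 - k) := by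
      rw [mul_sum]
      refine sum_congr rfl fun k hk => ?_
      rw [show n - k = n - 1 - k + 1 by grind, pow_succ]
      ring
    rw [sum_range_succ, Nat.add_sub_cancel, hdouble, pow_succ]
    simp only [Nat.sub_self, pow_zero]
    omega

theorem downClosure_eq_lowerClosure {c : ℕ} (M : Set (Fin c → ℕ)) :
    downClosure M = lowerClosure M := by
  ext χ
  simp [downClosure, mem_lowerClosure, Pi.le_def]

section Peak

variable {n : ℕ}

def peak (k : Fin n) : Fin n → ℕ := fun j => if j < k then 0 else if j = k then k + 2 else 1

theorem peak_le_one {j k : Fin n} (h : j ≠ k) : peak k j ≤ 1 := by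
  unfold peak
  split_ifs <;> omega

theorem single_two_le_peak (k : Fin n) : Pi.single k 2 ≤ peak k :=
  Pi.single_le_iff.2 (by simp [peak])

theorem one_le_peak_zero [NeZero n] : 1 ≤ peak (0 : Fin n) := fun j => by
  unfold peak
  split_ifs <;> simp_all

theorem range_peak_eq [NeZero n] :
    Set.range (peak (n := n)) = {fun j : Fin n => if j.val = 0 then 2 else 1}
        ∪ {t : Fin n → ℕ | ∃ i : ℕ, 2 ≤ i ∧ i ≤ n ∧
            t = fun j : Fin n => if j.val + 1 < i then 0 else if j.val + 1 = i then i + 1 else 1} := by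
  ext t
  simp only [Set.mem_range, Set.mem_union, Set.mem_singleton_iff, Set.mem_ofPred_eq]
  constructor
  · rintro ⟨k, rfl⟩
    by_cases hk : k.val = 0
    · left
      funext j
      simp only [peak, Fin.lt_def, Fin.ext_iff, hk]
      split_ifs <;> omega
    · right
      refine ⟨k + 1, by omega, by omega, funext fun j => ?_⟩
      simp only [peak, Fin.lt_def, Fin.ext_iff]
      split_ifs <;> omega
  · rintro (rfl | ⟨i, hi2, hin, rfl⟩)
    · refine ⟨0, funext fun j => ?_⟩
      simp only [peak, Fin.lt_def, Fin.ext_iff, Fin.val_zero]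
      split_ifs <;> omega
    · refine ⟨⟨i - 1, by omega⟩, funext fun j => ?_⟩
      simp only [peak, Fin.lt_def, Fin.ext_iff]
      split_ifs <;> omega

theorem Delta_subset_lowerClosure_range_peak :
    Delta n ⊆ lowerClosure (Set.range (peak (n := n))) := by
  rintro _ ⟨i, rfl⟩
  refine mem_lowerClosure.2 ⟨peak i, ⟨i, rfl⟩, fun j => ?_⟩
  simpa only [Pi.single_apply] using single_two_le_peak i j

theorem lowerClosure_range_peak [NeZero n] :
    (lowerClosure (Set.range (peak (n := n))) : Set (Fin n → ℕ)) =
      ↑(Iic 1 ∪ univ.biUnion fun k => Icc (Pi.single k 2) (peak k) : Finset (Fin n → ℕ)) := by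
  ext t
  simp only [SetLike.mem_coe, mem_lowerClosure, Set.exists_range_iff, coe_union, coe_biUnion,
    coe_univ, Set.mem_univ, Set.iUnion_true, Set.mem_union, coe_Iic, coe_Icc, Set.mem_Iic,
    Set.mem_iUnion, Set.mem_Icc]
  constructor
  · rintro ⟨k, htk⟩
    by_cases hk : t k ≤ 1
    · left
      intro j
      rcases eq_or_ne j k with rfl | hj
      · exact hk
      · exact (htk j).trans (peak_le_one hj)
    · exact Or.inr ⟨k, Pi.single_le_iff.2 (by omega), htk⟩
  · rintro (ht | ⟨k, -, htk⟩)
    · exact ⟨0, ht.trans one_le_peak_zero⟩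
    · exact ⟨k, htk⟩

theorem card_Icc_single_two_peak (k : Fin n) :
    #(Icc (Pi.single k 2) (peak k)) = ((k : ℕ) + 1) * 2 ^ (n - 1 - k) := by
  have hfactor : ∀ j, #(Icc ((Pi.single k 2 : Fin n → ℕ) j) (peak k j)) =
      (if j = k then (k : ℕ) + 1 else 1) * (if k < j then 2 else 1) := by
    intro j
    rcases lt_trichotomy j k with hj | rfl | hj
    · simp [peak, hj, hj.ne, hj.not_gt]
    · simp [peak]
    · simp [peak, hj, hj.ne', hj.not_gt]
  rw [Pi.card_Icc, prod_congr rfl fun j _ => hfactor j, prod_mul_distrib, prod_ite_eq',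
    ← prod_filter, prod_const, filter_lt_eq_Ioi, Fin.card_Ioi]
  simp

theorem card_Iic_one_union_biUnion_Icc_single_two_peak :
    #(Iic (1 : Fin n → ℕ) ∪ univ.biUnion fun k => Icc (Pi.single k 2) (peak k)) =
      3 * 2 ^ n - (n + 2) := by
  rw [card_union_of_disjoint, card_biUnion]
  · simp only [Pi.card_Iic, Pi.one_apply, Nat.card_Iic, card_Icc_single_two_peak, prod_const,
      Nat.reduceAdd, card_univ, Fintype.card_fin,
      Fin.sum_univ_eq_sum_range (fun k => (k + 1) * 2 ^ (n - 1 - k))]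
    have hsum := sum_range_succ_mul_two_pow_add n
    rw [pow_succ] at hsum
    omega
  · intro k _ l _ hkl
    refine disjoint_left.2 fun t htk htl => ?_
    have hle : t k ≤ peak l k := (mem_Icc.1 htl).2 k
    have := peak_le_one hkl
    have : 2 ≤ t k := Pi.single_le_iff.1 (mem_Icc.1 htk).1
    omega
  · refine (disjoint_biUnion_right _ _ _).2 fun k _ => disjoint_left.2 fun t ht1 htk => ?_
    have hle : t k ≤ 1 := mem_Iic.1 ht1 k
    have : 2 ≤ t k := Pi.single_le_iff.1 (mem_Icc.1 htk).1
    omega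

end Peak

/-- for `a ≥ 3`, the down-closure of the set consisting of the tuple
`(2,1,…,1)`, the tuples with `0` in coordinates `< i`, `i+1` in coordinate `i`, and `1`
in coordinates `> i` (for `2 ≤ i ≤ a-2`), and the elements of `Delta (a-2)`, has
exactly `3·2^(a-2) - a` elements. -/
theorem down_closure_complete_card (a : ℕ) (ha : 3 ≤ a) :
    (downClosure
      ({fun j : Fin (a - 2) => if j.val = 0 then 2 else 1}
        ∪ {t : Fin (a - 2) → ℕ | ∃ i : ℕ, 2 ≤ i ∧ i ≤ a - 2 ∧
            t = fun j : Fin (a - 2) =>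
              if j.val + 1 < i then 0 else if j.val + 1 = i then i + 1 else 1}
        ∪ Delta (a - 2))).ncard = 3 * 2 ^ (a - 2) - a := by
  have : NeZero (a - 2) := ⟨by omega⟩
  rw [downClosure_eq_lowerClosure, ← range_peak_eq,
    lowerClosure_union_of_subset Delta_subset_lowerClosure_range_peak, lowerClosure_range_peak,
    Set.ncard_coe_finset, card_Iic_one_union_biUnion_Icc_single_two_peak]
  omega

end TMEnum
end

section
/- Let a and b be positive integers with a <= b, and let S be the set of a-tuples of nonnegative integers consisting of, for each i in [a], the tuple with value b in coordinate i and 0 in all other coordinates, together with the all-ones a-tuple and the elements of Delta^a. Then the down-closure of S has at most 2^a + a*b elements. -/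
/-!
Every tuple below an element of the generating set is either a 0/1 tuple or is supported on a
single coordinate, where it takes a value between 2 and `max b 2`. There are `2^a` tuples of the
first kind and at most `a * (max b 2 - 1) ≤ a * b` of the second.
-/

namespace TMEnum

section

variable {ι : Type*} [DecidableEq ι]

theorem le_single_iff {χ : ι → ℕ} {i : ι} {v : ℕ} :
    χ ≤ Pi.single i v ↔ ∃ w ≤ v, χ = Pi.single i w := by
  constructor
  · intro h
    refine ⟨χ i, by simpa using h i, funext fun j => ?_⟩
    by_cases hj : j = i
    · subst hj
      simp
    · simpa [hj] using h j
  · rintro ⟨w, hw, rfl⟩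
    exact Pi.single_le_single.2 hw

theorem Iic_single_subset {i : ι} {v n : ℕ} (hv : v ≤ n) :
    Set.Iic (Pi.single i v) ⊆ Set.Iic 1 ∪ ⋃ j, Pi.single j '' Set.Icc 2 n := by
  intro χ hχ
  obtain ⟨w, hw, rfl⟩ := le_single_iff.1 hχ
  rcases le_or_gt w 1 with hw1 | hw1
  · left
    intro j
    by_cases hj : j = i
    · subst hj
      simpa using hw1
    · simp [hj]
  · right
    exact Set.mem_iUnion.2 ⟨i, w, ⟨hw1, hw.trans hv⟩, rfl⟩

variable [Fintype ι]

theorem ncard_le_of_subset_Iic_one_union_singles {s : Set (ι → ℕ)} {n : ℕ}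
    (hs : s ⊆ Set.Iic 1 ∪ ⋃ j, Pi.single j '' Set.Icc 2 n) :
    s.ncard ≤ 2 ^ Fintype.card ι + Fintype.card ι * (n - 1) := by
  set T : Finset (ι → ℕ) :=
    Finset.Iic 1 ∪ Finset.univ.biUnion fun j => (Finset.Icc 2 n).image (Pi.single j)
  have hT : Set.Iic 1 ∪ ⋃ j, Pi.single j '' Set.Icc 2 n = (T : Set (ι → ℕ)) := by
    simp [T]
  have hcube : (Finset.Iic (1 : ι → ℕ)).card = 2 ^ Fintype.card ι := by
    simp [Pi.card_Iic]
  have hsingles : (Finset.univ.biUnion fun j : ι => (Finset.Icc 2 n).image (Pi.single j)).card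
      ≤ Fintype.card ι * (n - 1) := by
    refine Finset.card_biUnion_le_card_mul _ _ _ fun j _ => Finset.card_image_le.trans ?_
    simp
  calc s.ncard ≤ T.card := by
        rw [← Set.ncard_coe_finset]
        exact Set.ncard_le_ncard (hT ▸ hs) T.finite_toSet
    _ ≤ _ := (Finset.card_union_le _ _).trans (by omega)

end

theorem down_closure_complete_bipartite_card_general (a b : ℕ) (hab : a ≤ b) :
    (downClosure
      ({t : Fin a → ℕ | ∃ i : Fin a, t = fun j => if j = i then b else 0}
        ∪ {fun _ : Fin a => 1}
        ∪ Delta a)).ncard ≤ 2 ^ a + a * b := by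
  have single_eq (i : Fin a) (v : ℕ) : (fun j => if j = i then v else 0) = Pi.single i v :=
    funext fun j => (Pi.single_apply i v j).symm
  have hsub : downClosure ({t : Fin a → ℕ | ∃ i : Fin a, t = fun j => if j = i then b else 0}
        ∪ {fun _ : Fin a => 1} ∪ Delta a)
      ⊆ Set.Iic 1 ∪ ⋃ j, Pi.single j '' Set.Icc 2 (max b 2) := by
    rintro χ ⟨δ, hδ, hχ⟩
    rcases hδ with (⟨i, rfl⟩ | rfl) | ⟨i, rfl⟩
    · exact Iic_single_subset (le_max_left b 2) (single_eq i b ▸ hχ)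
    · exact Or.inl hχ
    · exact Iic_single_subset (le_max_right b 2) (single_eq i 2 ▸ hχ)
  calc _ ≤ 2 ^ a + a * (max b 2 - 1) := by
        simpa using ncard_le_of_subset_Iic_one_union_singles hsub
    _ ≤ 2 ^ a + a * b := by
        rcases Nat.eq_zero_or_pos a with rfl | ha
        · simp
        · exact Nat.add_le_add_left (Nat.mul_le_mul_left a (by omega)) _

/-- for `0 < a ≤ b`, the down-closure of the set consisting of the tuples
with `b` in one coordinate and `0` elsewhere, the all-ones tuple, and the elements of
`Delta a`, has at most `2^a + a·b` elements. -/
theorem down_closure_complete_bipartite_card (a b : ℕ) (ha : 0 < a) (hab : a ≤ b) :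
    (downClosure
      ({t : Fin a → ℕ | ∃ i : Fin a, t = fun j => if j = i then b else 0}
        ∪ {fun _ : Fin a => 1}
        ∪ Delta a)).ncard ≤ 2 ^ a + a * b :=
  down_closure_complete_bipartite_card_general a b hab

end TMEnum
end
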